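/- Let D be a finite directed graph with distinguished vertices s and t, and let D' be obtained from D by adding, for every vertex v of D, edges t → v and v → s. Then there is a directed walk in D' starting at s that traverses every edge of D' at least once if and only if t is reachable from s in D'. -/

import Mathlib

private lemma walk_of_reach {V : Type*} {r : V → V → Prop} {a b : V}
    (h : Relation.ReflTransGen r a b) :
    ∃ (n : ℕ) (w : ℕ → V), w 0 = a ∧ w n = b ∧ ∀ i < n, r (w i) (w (i + 1)) := by
  induction h with
  | refl => exact ⟨0, fun _ => a, rfl, rfl, by omega⟩
  | @tail c d hac hcd ih =>
    obtain ⟨n, w, h0, hn, hstep⟩ := ih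
    refine ⟨n + 1, fun i => if i ≤ n then w i else d, by simp [h0], by simp, ?_⟩
    intro i hi
    rcases Nat.lt_or_ge i n with h | h
    · simp only [show i ≤ n by omega, show i + 1 ≤ n by omega, if_true]
      exact hstep i h
    · have : i = n := by omega
      subst this
      simp only [le_refl, if_true, show ¬ (i + 1 ≤ i) by omega, if_false]
      rw [hn]; exact hcd

private lemma walk_concat {V : Type*} {r : V → V → Prop} {n1 n2 : ℕ} {w1 w2 : ℕ → V}
    (hend : w1 n1 = w2 0)
    (h1 : ∀ i < n1, r (w1 i) (w1 (i + 1)))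
    (h2 : ∀ i < n2, r (w2 i) (w2 (i + 1))) :
    ∃ w : ℕ → V, (∀ i ≤ n1, w i = w1 i) ∧ (∀ j ≤ n2, w (n1 + j) = w2 j) ∧
      ∀ i < n1 + n2, r (w i) (w (i + 1)) := by
  refine ⟨fun i => if i ≤ n1 then w1 i else w2 (i - n1), ?_, ?_, ?_⟩
  · intro i hi; simp [hi]
  · intro j hj
    rcases Nat.eq_zero_or_pos j with h | h
    · subst h; simp [hend]
    · simp only [show ¬ (n1 + j ≤ n1) by omega, if_false]
      congr 1; omega
  · intro i hi
    rcases Nat.lt_or_ge i n1 with h | h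
    · simp only [show i ≤ n1 by omega, show i + 1 ≤ n1 by omega, if_true]
      exact h1 i h
    rcases Nat.eq_or_lt_of_le h with h' | h'
    · subst h'
      simp only [le_refl, if_true, show ¬ (n1 + 1 ≤ n1) by omega, if_false,
        show n1 + 1 - n1 = 1 by omega, hend]
      exact h2 0 (by omega)
    · simp only [show ¬ (i ≤ n1) by omega, show ¬ (i + 1 ≤ n1) by omega, if_false,
        show i + 1 - n1 = (i - n1) + 1 by omega]
      exact h2 (i - n1) (by omega)

private lemma cover_walk {V : Type*} {r : V → V → Prop} {s t : V}
    (hts : ∀ x, r t x) (hxs : ∀ x, r x s)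
    (hreach : Relation.ReflTransGen r s t) (L : List (V × V))
    (hL : ∀ p ∈ L, r p.1 p.2) :
    ∃ (n : ℕ) (w : ℕ → V), w 0 = s ∧ w n = s ∧ (∀ i < n, r (w i) (w (i + 1))) ∧
      ∀ p ∈ L, ∃ i < n, w i = p.1 ∧ w (i + 1) = p.2 := by
  induction L with
  | nil => exact ⟨0, fun _ => s, rfl, rfl, by omega, by simp⟩
  | cons p L ih =>
    obtain ⟨n, w, h0, hn, hstep, hcov⟩ := ih (fun q hq => hL q (List.mem_cons_of_mem _ hq))
    obtain ⟨m, u, u0, um, ustep⟩ := walk_of_reach hreach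
    -- segment v of length m + 3 : s ⇝ t → p.1 → p.2 → s
    set v : ℕ → V := fun i => if i ≤ m then u i else if i = m + 1 then p.1
      else if i = m + 2 then p.2 else s with hv
    have hv0 : v 0 = s := by simp [hv, u0]
    have hvend : v (m + 3) = s := by
      simp [hv, show ¬ (m + 3 ≤ m) by omega, show m + 3 ≠ m + 1 by omega,
        show m + 3 ≠ m + 2 by omega]
    have hv1 : v (m + 1) = p.1 := by simp [hv, show ¬ (m + 1 ≤ m) by omega]
    have hv2 : v (m + 2) = p.2 := by
      simp [hv, show ¬ (m + 2 ≤ m) by omega, show m + 2 ≠ m + 1 by omega]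
    have hvm : v m = t := by simp [hv, um]
    have hvstep : ∀ i < m + 3, r (v i) (v (i + 1)) := by
      intro i hi
      rcases Nat.lt_or_ge i m with h | h
      · simp only [hv, show i ≤ m by omega, show i + 1 ≤ m by omega, if_true]
        exact ustep i h
      have hcase : i = m ∨ i = m + 1 ∨ i = m + 2 := by omega
      rcases hcase with h' | h' | h' <;> subst h'
      · rw [hvm, hv1]; exact hts _
      · rw [show m + 1 + 1 = m + 2 from rfl, hv1, hv2]
        exact hL p List.mem_cons_self
      · rw [show m + 2 + 1 = m + 3 from rfl, hv2, hvend]; exact hxs _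
    obtain ⟨W, hW1, hW2, hWstep⟩ := walk_concat (hn.trans hv0.symm) hstep hvstep
    refine ⟨n + (m + 3), W, by rw [hW1 0 (by omega), h0], by rw [hW2 (m + 3) le_rfl, hvend],
      hWstep, ?_⟩
    intro q hq
    rcases List.mem_cons.mp hq with h | h
    · subst h
      exact ⟨n + (m + 1), by omega, by rw [show n + (m + 1) = n + (m + 1) from rfl,
        hW2 (m + 1) (by omega), hv1], by rw [show n + (m + 1) + 1 = n + (m + 2) by omega,
        hW2 (m + 2) (by omega), hv2]⟩
    · obtain ⟨i, hi, h1, h2⟩ := hcov q h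
      exact ⟨i, by omega, by rw [hW1 i (by omega), h1], by rw [hW1 (i + 1) (by omega), h2]⟩

/-- Adding edges `t → v` and `v → s` for all `v` to a finite
digraph `D` yields `D'` in which some directed walk from `s` traverses every edge
of `D'` at least once iff `t` is reachable from `s` in `D'`. -/
theorem stmt_10 {V : Type*} [Fintype V] (E : V → V → Prop) (s t : V) :
    (∃ (n : ℕ) (w : ℕ → V), w 0 = s ∧
        (∀ i < n, (fun x y => E x y ∨ x = t ∨ y = s) (w i) (w (i + 1))) ∧
        ∀ x y, (E x y ∨ x = t ∨ y = s) → ∃ i < n, w i = x ∧ w (i + 1) = y) ↔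
      Relation.ReflTransGen (fun x y => E x y ∨ x = t ∨ y = s) s t := by
  set r : V → V → Prop := fun x y => E x y ∨ x = t ∨ y = s with hr
  constructor
  · rintro ⟨n, w, h0, hstep, hcov⟩
    obtain ⟨i, hi, hwi, -⟩ := hcov t t (Or.inr (Or.inl rfl))
    have key : ∀ i ≤ n, Relation.ReflTransGen r s (w i) := by
      intro i
      induction i with
      | zero => intro _; rw [h0]
      | succ k ihk => intro hk; exact (ihk (by omega)).tail (hstep k (by omega))
    rw [← hwi]
    exact key i (by omega)
  · intro hreach
    classical
    set L : List (V × V) :=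
      ((Finset.univ : Finset (V × V)).filter fun p => r p.1 p.2).toList with hLdef
    have hL : ∀ p ∈ L, r p.1 p.2 := by
      intro p hp
      rw [hLdef, Finset.mem_toList, Finset.mem_filter] at hp
      exact hp.2
    obtain ⟨n, w, h0, _, hstep, hcov⟩ :=
      cover_walk (r := r) (fun x => Or.inr (Or.inl rfl)) (fun x => Or.inr (Or.inr rfl))
        hreach L hL
    refine ⟨n, w, h0, hstep, ?_⟩
    intro x y hxy
    exact hcov (x, y) (by
      rw [hLdef, Finset.mem_toList, Finset.mem_filter]
      exact ⟨Finset.mem_univ _, hxy⟩)
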